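/- arXiv:2101.07184 — 2 statements merged into one kernel-verified Lean document; each statement's English description precedes it below -/
import Mathlib

section
/- Let W be an irreducible module over the Clifford algebra Cl^{n,n} of a real quadratic form of neutral signature (n,n), with n > 1. Suppose ⟨·,·⟩_W and ⟨·,·⟩'_W are two nonzero bilinear pairings on W each satisfying ⟨u·s, u·s̃⟩ = ⟨u,u⟩⟨s, s̃⟩ for all u ∈ ℝ^{n,n} and s, s̃ ∈ W. Then ⟨·,·⟩'_W = c·⟨·,·⟩_W for some nonzero constant c ∈ ℝ. -/
/-!
Pick a basis `e₁, …, eₙ, f₁, …, fₙ` with `Q eᵢ = 1`, `Q fᵢ = -1`, pairwise orthogonal. The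
`kᵢ = eᵢ fᵢ` act on `W` as commuting involutions with a common fixed vector `w₀ ≠ 0`; since
`fᵢ w₀ = eᵢ w₀`, irreducibility makes `W` the real span of the vectors `e_M w₀`, `M` a word in the
`eᵢ`. For a compatible pairing each `eᵢ` is self-adjoint and each `kᵢ` anti-isometric, so
`⟨e_K w₀, e_L w₀⟩ = ±⟨w₀, e_T w₀⟩` for an ordered product `e_T` depending only on `K` and `L`, and
this vanishes unless `T` contains every index (if `i ∉ T`, then `kᵢ` fixes both arguments).
Thus a compatible pairing is determined by the single number `⟨w₀, e₁ ⋯ eₙ w₀⟩`.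
-/

open CliffordAlgebra

namespace AnticommutingInvolutions

variable {A ι : Type*} [Ring A] (e : ι → A)

def listProd (M : List ι) : A := (M.map e).prod

def orderedProd [LinearOrder ι] (T : Finset ι) : A := listProd e (T.sort (· ≤ ·))

@[simp] lemma listProd_nil : listProd e [] = 1 := rfl

@[simp] lemma listProd_cons (i : ι) (M : List ι) :
    listProd e (i :: M) = e i * listProd e M := List.prod_cons

@[simp] lemma listProd_append (K M : List ι) :
    listProd e (K ++ M) = listProd e K * listProd e M := by
  simp [listProd]

variable [LinearOrder ι]

@[simp] lemma orderedProd_empty : orderedProd e ∅ = 1 := by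
  simp [orderedProd]

lemma orderedProd_insert_of_lt {a : ι} {T : Finset ι} (ha : ∀ x ∈ T, a < x) :
    orderedProd e (insert a T) = e a * orderedProd e T := by
  rw [orderedProd, Finset.sort_insert _ (fun x hx => (ha x hx).le) (fun h => (ha a h).false),
    listProd_cons, orderedProd]

variable {e} (he_sq : ∀ i, e i * e i = 1)
  (he_anti : Pairwise fun i j => e i * e j = -(e j * e i))
include he_sq he_anti

lemma exists_mul_orderedProd (i : ι) (T : Finset ι) :
    ∃ (ε : ℤ) (T' : Finset ι), T' ⊆ insert i T ∧
      e i * orderedProd e T = ε • orderedProd e T' := by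
  classical
  induction T using Finset.induction_on_min with
  | empty => exact ⟨1, {i}, by simp, by simp [orderedProd]⟩
  | insert a T haT ih =>
    rw [orderedProd_insert_of_lt e haT]
    rcases lt_trichotomy i a with hia | rfl | hai
    · refine ⟨1, insert i (insert a T), subset_rfl, ?_⟩
      rw [one_smul, orderedProd_insert_of_lt e, orderedProd_insert_of_lt e haT]
      simp only [Finset.mem_insert, forall_eq_or_imp]
      exact ⟨hia, fun x hx => hia.trans (haT x hx)⟩
    · exact ⟨1, T, by grind, by rw [← mul_assoc, he_sq, one_mul, one_smul]⟩
    · obtain ⟨ε, T', hT', hmul⟩ := ih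
      have haT' : ∀ x ∈ T', a < x := fun x hx => by
        rcases Finset.mem_insert.1 (hT' hx) with rfl | hx
        exacts [hai, haT x hx]
      refine ⟨-ε, insert a T', by grind, ?_⟩
      rw [orderedProd_insert_of_lt e haT', ← mul_assoc, he_anti hai.ne', neg_mul, mul_assoc,
        hmul, mul_smul_comm, neg_smul]

lemma exists_listProd_eq_smul_orderedProd (M : List ι) :
    ∃ (ε : ℤ) (T : Finset ι), listProd e M = ε • orderedProd e T := by
  induction M with
  | nil => exact ⟨1, ∅, by simp⟩
  | cons i M ih =>
    obtain ⟨ε, T, hM⟩ := ih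
    obtain ⟨ε', T', -, hmul⟩ := exists_mul_orderedProd he_sq he_anti i T
    exact ⟨ε * ε', T', by rw [listProd_cons, hM, mul_smul_comm, hmul, smul_smul]⟩

end AnticommutingInvolutions

lemma weightedSumSquares_single {R ι : Type*} [CommRing R] [Fintype ι] [DecidableEq ι]
    (w : ι → R) (j : ι) :
    QuadraticMap.weightedSumSquares R w (Pi.single j 1) = w j := by
  simp [QuadraticMap.weightedSumSquares_apply, Pi.single_apply]

lemma isOrtho_weightedSumSquares {R ι : Type*} [CommRing R] [Fintype ι] (w : ι → R)
    {x y : ι → R} (hxy : ∀ k, x k * y k = 0) :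
    (QuadraticMap.weightedSumSquares R w).IsOrtho x y := by
  rw [QuadraticMap.isOrtho_def]
  simp only [QuadraticMap.weightedSumSquares_apply, Pi.add_apply, smul_eq_mul,
    ← Finset.sum_add_distrib]
  refine Finset.sum_congr rfl fun k _ => ?_
  linear_combination (2 * w k) * hxy k

lemma exists_basis_of_equivalent_weightedSumSquares {R V ι : Type*} [CommRing R]
    [AddCommGroup V] [Module R V] [Fintype ι] [DecidableEq ι] {Q : QuadraticForm R V}
    {w : ι → R} (hQ : Q.Equivalent (QuadraticMap.weightedSumSquares R w)) :
    ∃ b : Module.Basis ι R V,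
      (∀ j, Q (b j) = w j) ∧ Pairwise fun j j' => Q.IsOrtho (b j) (b j') := by
  obtain ⟨φ⟩ := hQ.symm
  refine ⟨(Pi.basisFun R ι).map φ.toLinearEquiv, fun j => ?_, fun j j' hjj' => ?_⟩
  · rw [Module.Basis.map_apply, Pi.basisFun_apply, φ.coe_toLinearEquiv, φ.map_app,
      weightedSumSquares_single]
  · have := isOrtho_weightedSumSquares w (x := Pi.single j 1) (y := Pi.single j' 1) fun k => by
      by_cases hk : k = j <;> simp_all [Pi.single_apply]
    simpa [QuadraticMap.isOrtho_def, ← map_add, φ.map_app] using this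

section

variable {V : Type*} [AddCommGroup V] [Module ℝ V] {Q : QuadraticForm ℝ V}
  {W : Type*} [AddCommGroup W] [Module ℝ W] [Module (CliffordAlgebra Q) W]
  [IsScalarTower ℝ (CliffordAlgebra Q) W]

lemma smul_mem_of_forall_ι_smul_mem {κ : Type*} (b : Module.Basis κ ℝ V) {S : Submodule ℝ W}
    (hS : ∀ j, ∀ x ∈ S, ι Q (b j) • x ∈ S) (a : CliffordAlgebra Q) : ∀ x ∈ S, a • x ∈ S := by
  induction a using CliffordAlgebra.induction with
  | algebraMap r => intro x hx; rw [algebraMap_smul]; exact S.smul_mem r hx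
  | ι v =>
    intro x hx
    induction b.mem_span v using Submodule.span_induction with
    | mem v hv => obtain ⟨j, rfl⟩ := hv; exact hS j x hx
    | zero => rw [map_zero, zero_smul]; exact S.zero_mem
    | add u v _ _ hu hv => rw [map_add, add_smul]; exact S.add_mem hu hv
    | smul r v _ hv => rw [map_smul, smul_assoc]; exact S.smul_mem r hv
  | mul a a' ha ha' => intro x hx; rw [mul_smul]; exact ha _ (ha' x hx)
  | add a a' ha ha' => intro x hx; rw [add_smul]; exact S.add_mem (ha x hx) (ha' x hx)

variable (Q W) in
def compatibleForms : Submodule ℝ (LinearMap.BilinForm ℝ W) where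
  carrier := {C | ∀ u s t, C (ι Q u • s) (ι Q u • t) = Q u * C s t}
  add_mem' hC hC' u s t := by simp [hC u, hC' u, mul_add]
  zero_mem' := by simp
  smul_mem' r C hC u s t := by simp [hC u, mul_left_comm]

lemma apply_ι_smul_left_of_mem_compatibleForms {C : LinearMap.BilinForm ℝ W}
    (hC : C ∈ compatibleForms Q W) {u : V} (hu : Q u ≠ 0) (s t : W) :
    C (ι Q u • s) t = C s (ι Q u • t) := by
  have h := hC u s (ι Q u • t)
  rw [← mul_smul, ι_sq_scalar, algebraMap_smul, map_smul, smul_eq_mul] at h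
  exact mul_left_cancel₀ hu h

end

lemma Commute.mul_left_of_anticomm {R : Type*} [Ring R] {a b x : R} (ha : a * x = -(x * a))
    (hb : b * x = -(x * b)) : Commute (a * b) x := by
  rw [Commute, SemiconjBy, mul_assoc, hb, mul_neg, ← mul_assoc, ha, neg_mul, neg_neg, mul_assoc]

namespace NeutralClifford

open AnticommutingInvolutions

variable {V κ : Type*} [AddCommGroup V] [Module ℝ V] (Q : QuadraticForm ℝ V)
  (b : Module.Basis (κ ⊕ κ) ℝ V)

noncomputable def e (i : κ) : CliffordAlgebra Q := ι Q (b (.inl i))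

noncomputable def f (i : κ) : CliffordAlgebra Q := ι Q (b (.inr i))

noncomputable def k (i : κ) : CliffordAlgebra Q := e Q b i * f Q b i

variable {Q b} (hQe : ∀ i, Q (b (.inl i)) = 1) (hQf : ∀ i, Q (b (.inr i)) = -1)
  (hb_ortho : Pairwise fun j j' => Q.IsOrtho (b j) (b j'))

include hQe in
lemma e_mul_self (i : κ) : e Q b i * e Q b i = 1 := by
  rw [e, ι_sq_scalar, hQe, map_one]

include hQf in
lemma f_mul_self (i : κ) : f Q b i * f Q b i = -1 := by
  rw [f, ι_sq_scalar, hQf, map_neg, map_one]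

include hb_ortho in
lemma e_anticomm : Pairwise fun (i j : κ) => e Q b i * e Q b j = -(e Q b j * e Q b i) :=
  fun _ _ hij => ι_mul_ι_comm_of_isOrtho (hb_ortho (by simpa using hij))

include hb_ortho in
lemma f_anticomm {i j : κ} (hij : i ≠ j) : f Q b i * f Q b j = -(f Q b j * f Q b i) :=
  ι_mul_ι_comm_of_isOrtho (hb_ortho (by simpa using hij))

include hb_ortho in
lemma e_f_anticomm (i j : κ) : e Q b i * f Q b j = -(f Q b j * e Q b i) :=
  ι_mul_ι_comm_of_isOrtho (hb_ortho (by simp))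

include hb_ortho in
lemma f_e_anticomm (i j : κ) : f Q b j * e Q b i = -(e Q b i * f Q b j) := by
  rw [e_f_anticomm hb_ortho, neg_neg]

include hb_ortho in
lemma k_commute_e {i j : κ} (hij : i ≠ j) : Commute (k Q b i) (e Q b j) :=
  .mul_left_of_anticomm (e_anticomm hb_ortho hij) (f_e_anticomm hb_ortho j i)

include hb_ortho in
lemma k_commute_f {i j : κ} (hij : i ≠ j) : Commute (k Q b i) (f Q b j) :=
  .mul_left_of_anticomm (e_f_anticomm hb_ortho i j) (f_anticomm hb_ortho hij)

include hb_ortho in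
lemma k_commute_k (i j : κ) : Commute (k Q b i) (k Q b j) := by
  obtain rfl | hij := eq_or_ne i j
  · exact .refl _
  · exact (k_commute_e hb_ortho hij).mul_right (k_commute_f hb_ortho hij)

include hb_ortho in
lemma k_mul_e (i : κ) : k Q b i * e Q b i = -(e Q b i * k Q b i) := by
  rw [k, mul_assoc, f_e_anticomm hb_ortho, mul_neg, ← mul_assoc]

include hQe hQf hb_ortho in
lemma k_mul_self (i : κ) : k Q b i * k Q b i = 1 := by
  rw [k, mul_assoc, ← mul_assoc (f Q b i), f_e_anticomm hb_ortho, neg_mul, mul_neg, ← mul_assoc,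
    ← mul_assoc, e_mul_self hQe, one_mul, f_mul_self hQf, neg_neg]

include hQe in
lemma e_mul_k (i : κ) : e Q b i * k Q b i = f Q b i := by
  rw [k, ← mul_assoc, e_mul_self hQe, one_mul]

include hb_ortho in
lemma f_mul_listProd (i : κ) (M : List κ) :
    f Q b i * listProd (e Q b) M = (-1 : ℤ) ^ M.length • (listProd (e Q b) M * f Q b i) := by
  induction M with
  | nil => simp
  | cons j M ih =>
    rw [listProd_cons, ← mul_assoc, f_e_anticomm hb_ortho, neg_mul, mul_assoc, ih, mul_smul_comm,
      List.length_cons, pow_succ, mul_neg_one, neg_smul, ← mul_assoc]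

include hb_ortho in
lemma k_commute_orderedProd [LinearOrder κ] {i : κ} {T : Finset κ} (hi : i ∉ T) :
    Commute (k Q b i) (orderedProd (e Q b) T) :=
  Commute.list_prod_right _ _ fun x hx => by
    obtain ⟨j, hj, rfl⟩ := List.mem_map.1 hx
    exact k_commute_e hb_ortho fun h => hi (h ▸ (Finset.mem_sort _).1 hj)

variable {W : Type*} [AddCommGroup W] [Module (CliffordAlgebra Q) W]

include hQe hQf hb_ortho in
lemma exists_ne_zero_forall_k_smul_eq [Fintype κ] [Nontrivial W] :
    ∃ w : W, w ≠ 0 ∧ ∀ i, k Q b i • w = w := by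
  classical
  suffices h : ∀ s : Finset κ, ∃ w : W, w ≠ 0 ∧ ∀ i ∈ s, k Q b i • w = w by
    obtain ⟨w, hw, hfix⟩ := h Finset.univ
    exact ⟨w, hw, fun i => hfix i (Finset.mem_univ i)⟩
  intro s
  induction s using Finset.induction_on with
  | empty => simpa using exists_ne (0 : W)
  | insert a s has ih =>
    obtain ⟨w, hw, hfix⟩ := ih
    have hne : ∀ i ∈ s, i ≠ a := fun i hi h => has (h ▸ hi)
    -- Either `w + k a • w` is fixed by `k a`, or `k a • w = -w` and then `e a • w` is, since
    -- `e a` anticommutes with `k a` and commutes with the other `k i`.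
    by_cases hsum : w + k Q b a • w = 0
    · have hka : k Q b a • w = -w := eq_neg_of_add_eq_zero_right hsum
      refine ⟨e Q b a • w, fun h => hw ?_,
        Finset.forall_mem_insert _ _ _ |>.2 ⟨?_, fun i hi => ?_⟩⟩
      · rw [← one_smul (CliffordAlgebra Q) w, ← e_mul_self hQe a, mul_smul, h, smul_zero]
      · rw [← mul_smul, k_mul_e hb_ortho, neg_smul, mul_smul, hka, smul_neg, neg_neg]
      · rw [← mul_smul, (k_commute_e hb_ortho (hne i hi)).eq, mul_smul, hfix i hi]
    · refine ⟨w + k Q b a • w, hsum,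
        Finset.forall_mem_insert _ _ _ |>.2 ⟨?_, fun i hi => ?_⟩⟩
      · rw [smul_add, ← mul_smul, k_mul_self hQe hQf hb_ortho, one_smul, add_comm]
      · rw [smul_add, hfix i hi, ← mul_smul, (k_commute_k hb_ortho i a).eq, mul_smul, hfix i hi]

variable [Module ℝ W] {C : LinearMap.BilinForm ℝ W} (hC : C ∈ compatibleForms Q W)

include hQe hQf hC in
lemma apply_k_smul_k_smul (i : κ) (s t : W) : C (k Q b i • s) (k Q b i • t) = -C s t := by
  rw [k, mul_smul, mul_smul, e, f, hC, hC, hQe, hQf]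
  ring

include hQe hQf hb_ortho hC in
lemma apply_orderedProd_smul_eq_zero [LinearOrder κ] {w₀ : W} (hfix : ∀ i, k Q b i • w₀ = w₀)
    {T : Finset κ} {i : κ} (hi : i ∉ T) : C w₀ (orderedProd (e Q b) T • w₀) = 0 := by
  have hk : k Q b i • orderedProd (e Q b) T • w₀ = orderedProd (e Q b) T • w₀ := by
    rw [← mul_smul, (k_commute_orderedProd hb_ortho hi).eq, mul_smul, hfix]
  have := apply_k_smul_k_smul hQe hQf hC i w₀ (orderedProd (e Q b) T • w₀)
  rw [hfix, hk] at this
  linarith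

variable [IsScalarTower ℝ (CliffordAlgebra Q) W]

include hQe hb_ortho in
lemma span_listProd_smul_eq_top [IsSimpleModule (CliffordAlgebra Q) W] {w₀ : W}
    (hw₀ : w₀ ≠ 0) (hfix : ∀ i, k Q b i • w₀ = w₀) :
    Submodule.span ℝ (Set.range fun M : List κ => listProd (e Q b) M • w₀) = ⊤ := by
  set S := Submodule.span ℝ (Set.range fun M : List κ => listProd (e Q b) M • w₀)
  have hgen : ∀ j, ∀ x ∈ S, ι Q (b j) • x ∈ S := by
    intro j x hx
    induction hx using Submodule.span_induction with
    | mem x hx =>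
      obtain ⟨M, rfl⟩ := hx
      cases j with
      | inl i =>
        exact Submodule.subset_span ⟨i :: M, by simp only [listProd_cons, mul_smul]; rfl⟩
      | inr i =>
        have hf : f Q b i • w₀ = e Q b i • w₀ := by rw [← e_mul_k hQe, mul_smul, hfix]
        have : f Q b i • listProd (e Q b) M • w₀ =
            (-1 : ℤ) ^ M.length • listProd (e Q b) (M ++ [i]) • w₀ := by
          rw [← mul_smul, f_mul_listProd hb_ortho, smul_assoc, mul_smul, hf, ← mul_smul,
            listProd_append, listProd_cons, listProd_nil, mul_one]
        rw [show ι Q (b (.inr i)) = f Q b i from rfl, this]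
        exact S.smul_of_tower_mem _ (Submodule.subset_span (Set.mem_range_self (M ++ [i])))
    | zero => rw [smul_zero]; exact S.zero_mem
    | add x y _ _ hx hy => rw [smul_add]; exact S.add_mem hx hy
    | smul r x _ hx => rw [smul_comm]; exact S.smul_mem r hx
  rw [eq_top_iff]
  rintro x -
  obtain ⟨a, rfl⟩ := IsSimpleModule.toSpanSingleton_surjective (CliffordAlgebra Q) hw₀ x
  exact smul_mem_of_forall_ι_smul_mem b hgen a w₀ (Submodule.subset_span ⟨[], one_smul _ _⟩)

include hQe hC in
lemma apply_listProd_smul_left (M : List κ) (s t : W) :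
    C (listProd (e Q b) M • s) t = C s (listProd (e Q b) M.reverse • t) := by
  induction M generalizing t with
  | nil => simp
  | cons i M ih =>
    have hQi : Q (b (.inl i)) ≠ 0 := by rw [hQe]; exact one_ne_zero
    rw [listProd_cons, mul_smul, e, apply_ι_smul_left_of_mem_compatibleForms hC hQi, ih,
      List.reverse_cons, listProd_append, mul_smul, listProd_cons, listProd_nil, mul_one, e]

include hQe hQf hb_ortho hC in
lemma eq_zero_of_apply_orderedProd_univ_eq_zero [Fintype κ] [LinearOrder κ]
    [IsSimpleModule (CliffordAlgebra Q) W] {w₀ : W} (hw₀ : w₀ ≠ 0)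
    (hfix : ∀ i, k Q b i • w₀ = w₀) (h : C w₀ (orderedProd (e Q b) Finset.univ • w₀) = 0) :
    C = 0 := by
  have hspan := span_listProd_smul_eq_top hQe hb_ortho hw₀ hfix
  refine LinearMap.ext_on hspan fun _ ⟨K, hK⟩ => LinearMap.ext_on hspan fun _ ⟨L, hL⟩ => ?_
  subst hK hL
  obtain ⟨ε, T, hKL⟩ :=
    exists_listProd_eq_smul_orderedProd (e_mul_self hQe) (e_anticomm hb_ortho) (K.reverse ++ L)
  simp only [LinearMap.zero_apply]
  rw [apply_listProd_smul_left hQe hC, ← mul_smul, ← listProd_append, hKL, smul_assoc,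
    map_zsmul]
  by_cases hT : ∃ i, i ∉ T
  · obtain ⟨i, hi⟩ := hT
    rw [apply_orderedProd_smul_eq_zero hQe hQf hb_ortho hC hfix hi, smul_zero]
  · rw [Finset.eq_univ_of_forall (s := T) (by simpa using hT), h, smul_zero]

end NeutralClifford

open NeutralClifford AnticommutingInvolutions

theorem pairing_unique_up_to_scalar_general {V : Type*} [AddCommGroup V] [Module ℝ V]
    (n : ℕ) (Q : QuadraticForm ℝ V)
    (hQ : QuadraticMap.Equivalent Q
      (QuadraticMap.weightedSumSquares ℝ
        (Sum.elim (fun _ : Fin n => (1 : ℝ)) (fun _ : Fin n => (-1 : ℝ)))))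
    (W : Type*) [AddCommGroup W] [Module ℝ W] [Module (CliffordAlgebra Q) W]
    [IsScalarTower ℝ (CliffordAlgebra Q) W] [IsSimpleModule (CliffordAlgebra Q) W]
    (B B' : LinearMap.BilinForm ℝ W) (hB : B ≠ 0) (hB' : B' ≠ 0)
    (hBcompat : ∀ (u : V) (s t : W), B (ι Q u • s) (ι Q u • t) = Q u * B s t)
    (hB'compat : ∀ (u : V) (s t : W), B' (ι Q u • s) (ι Q u • t) = Q u * B' s t) :
    ∃ c : ℝ, c ≠ 0 ∧ B' = c • B := by
  obtain ⟨b, hQb, hb_ortho⟩ := exists_basis_of_equivalent_weightedSumSquares hQ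
  have hQe : ∀ i, Q (b (.inl i)) = 1 := fun i => hQb (.inl i)
  have hQf : ∀ i, Q (b (.inr i)) = -1 := fun i => hQb (.inr i)
  have := IsSimpleModule.nontrivial (CliffordAlgebra Q) W
  obtain ⟨w₀, hw₀, hfix⟩ := exists_ne_zero_forall_k_smul_eq (W := W) hQe hQf hb_ortho
  let value (C : LinearMap.BilinForm ℝ W) : ℝ := C w₀ (orderedProd (e Q b) Finset.univ • w₀)
  have h_inj : ∀ C ∈ compatibleForms Q W, value C = 0 → C = 0 := fun _ hC =>
    eq_zero_of_apply_orderedProd_univ_eq_zero hQe hQf hb_ortho hC hw₀ hfix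
  have hBmem : B ∈ compatibleForms Q W := hBcompat
  have hB'mem : B' ∈ compatibleForms Q W := hB'compat
  have hB₀ : value B ≠ 0 := fun h => hB (h_inj B hBmem h)
  refine ⟨value B' / value B, fun hc => hB' (h_inj B' hB'mem ?_), ?_⟩
  · simpa [hB₀] using hc
  · -- phrased with `+`: no `AddSubgroupClass` instance is found for `Submodule ℝ (BilinForm ℝ W)`
    have h₀ : B' + (-(value B' / value B)) • B = 0 :=
      h_inj _ (add_mem hB'mem (Submodule.smul_mem _ _ hBmem)) (by simp [value, hB₀])
    ext s t
    simpa [add_eq_zero_iff_eq_neg] using LinearMap.congr_fun₂ h₀ s t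

/-- Let `W` be an irreducible module over the Clifford algebra `Cl^{n,n}` of a
real quadratic form of neutral signature `(n,n)`, with `n > 1`.  Any two nonzero bilinear
pairings on `W` compatible with Clifford multiplication (`⟨u·s, u·s̃⟩ = ⟨u,u⟩⟨s,s̃⟩` for all
vectors `u`) differ by a nonzero real constant. -/
theorem pairing_unique_up_to_scalar {V : Type*} [AddCommGroup V] [Module ℝ V]
    (n : ℕ) (hn : 1 < n) (Q : QuadraticForm ℝ V)
    (hQ : QuadraticMap.Equivalent Q
      (QuadraticMap.weightedSumSquares ℝ
        (Sum.elim (fun _ : Fin n => (1 : ℝ)) (fun _ : Fin n => (-1 : ℝ)))))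
    (W : Type*) [AddCommGroup W] [Module ℝ W] [Module (CliffordAlgebra Q) W]
    [IsScalarTower ℝ (CliffordAlgebra Q) W] [IsSimpleModule (CliffordAlgebra Q) W]
    (B B' : LinearMap.BilinForm ℝ W) (hB : B ≠ 0) (hB' : B' ≠ 0)
    (hBcompat : ∀ (u : V) (s t : W), B (ι Q u • s) (ι Q u • t) = Q u * B s t)
    (hB'compat : ∀ (u : V) (s t : W), B' (ι Q u • s) (ι Q u • t) = Q u * B' s t) :
    ∃ c : ℝ, c ≠ 0 ∧ B' = c • B :=
  pairing_unique_up_to_scalar_general n Q hQ W B B' hB hB' hBcompat hB'compat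
end

section
/- Let W be an irreducible Cl^{n,n}-module with n > 1, and let ⟨·,·⟩ be a bilinear pairing on W satisfying ⟨u·s, u·s̃⟩ = ⟨u,u⟩⟨s,s̃⟩ for all u ∈ ℝ^{n,n}. Choose v ∈ ℝ^{n,n} with ⟨v,v⟩ = 1 and a basis of W of the form (w_1, …, w_{r/2}, v·w_1, …, v·w_{r/2}), where r = dim W = 2^n. Then the Gram determinant of ⟨·,·⟩ in this basis is a perfect square; in particular it is nonnegative. For n = 1 the Gram determinant is minus a perfect square, hence nonpositive. -/
/-!
Pick `u ⊥ v` with `⟨u, u⟩ = -1` (swap the two halves of the coordinates of `v` in a split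
basis). Clifford multiplication by `v` is an involution `σ` preserving the pairing, and
multiplication by `u` is an injective anti-isometry `τ` anticommuting with `σ`. The vectors
`s_i = w_i + v·w_i` are independent and fixed by `σ`, the `u·s_i` lie in the `-1`-eigenspace of
`σ`, and the two eigenspaces are orthogonal; so in the basis `(s_i, u·s_i)` the Gram matrix is
`diag(G, -G)`, of determinant `(-1)^(r/2) (det G)^2`. A change of basis multiplies the Gram
determinant by a nonzero square, and `r/2 = 2^(n-1)` is even exactly when `n > 1`.
-/

open CliffordAlgebra

namespace QuadraticMap

variable {R V ι : Type*} [CommRing R] [AddCommGroup V] [Module R V] [Fintype ι]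

lemma weightedSumSquares_split_apply (x : ι ⊕ ι → R) :
    weightedSumSquares R (Sum.elim (fun _ : ι => (1 : R)) fun _ : ι => -1) x =
      ∑ i, (x (.inl i) * x (.inl i) - x (.inr i) * x (.inr i)) := by
  rw [weightedSumSquares_apply, Fintype.sum_sum_type, Finset.sum_sub_distrib]
  simp [sub_eq_add_neg]

lemma exists_isOrtho_eq_neg_of_equivalent_split {Q : QuadraticMap R V R}
    (hQ : Q.Equivalent (weightedSumSquares R (Sum.elim (fun _ : ι => (1 : R)) fun _ : ι => -1)))
    (v : V) : ∃ u, Q u = -Q v ∧ Q.IsOrtho v u := by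
  obtain ⟨f⟩ := hQ
  refine ⟨f.symm (f v ∘ Sum.swap), ?_, ?_⟩
  · rw [← f.map_app, ← f.map_app v, f.apply_symm_apply, weightedSumSquares_split_apply,
      weightedSumSquares_split_apply, ← Finset.sum_neg_distrib]
    simp
  · rw [IsOrtho, ← f.map_app, ← f.map_app v, ← f.map_app, map_add, f.apply_symm_apply]
    simp only [weightedSumSquares_split_apply, Pi.add_apply, Function.comp_apply, Sum.swap_inl,
      Sum.swap_inr, ← Finset.sum_add_distrib]
    exact Finset.sum_congr rfl fun _ _ => by ring

end QuadraticMap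

lemma Module.Basis.linearIndependent_inl_add_inr {R M ι : Type*} [CommRing R] [AddCommGroup M]
    [Module R M] [DecidableEq ι] (b : Module.Basis (ι ⊕ ι) R M) :
    LinearIndependent R fun i => b (.inl i) + b (.inr i) := by
  have h : (LinearMap.pi fun j => b.coord (.inl j)) ∘ (fun i => b (.inl i) + b (.inr i)) =
      fun i => Pi.single i 1 := by
    ext i j
    simp [Finsupp.single_apply, Pi.single_apply, eq_comm]
  exact .of_comp _ (h ▸ Pi.linearIndependent_single_one ι R)

lemma Module.End.disjoint_ker_sub_one_ker_add_one {K W : Type*} [Field K] [NeZero (2 : K)]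
    [AddCommGroup W] [Module K W] (σ : Module.End K W) :
    Disjoint (LinearMap.ker (σ - 1)) (LinearMap.ker (σ + 1)) := by
  refine Submodule.disjoint_def.mpr fun x hx hx' => ?_
  have h : x = -x := by
    rw [LinearMap.mem_ker, LinearMap.sub_apply, sub_eq_zero] at hx
    rw [LinearMap.mem_ker, LinearMap.add_apply, add_eq_zero_iff_eq_neg] at hx'
    simpa [hx] using hx'
  have h2 : (2 : K) • x = 0 := by rw [two_smul]; nth_rw 2 [h]; exact add_neg_cancel x
  exact (smul_eq_zero.mp h2).resolve_left two_ne_zero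

namespace LinearMap.BilinForm

variable {K W ι : Type*} [Field K] [NeZero (2 : K)] [AddCommGroup W] [Module K W]
  [Fintype ι] [DecidableEq ι] {B : LinearMap.BilinForm K W}

omit [NeZero (2 : K)] in
lemma det_toMatrix_eq_det_toMatrix_mul_sq (b b' : Module.Basis ι K W) :
    (toMatrix b' B).det = (toMatrix b B).det * b.det b' ^ 2 := by
  rw [← toMatrix_mul_basis_toMatrix b b' B, Matrix.det_mul, Matrix.det_mul, Matrix.det_transpose,
    Module.Basis.det_apply]
  ring

omit [Fintype ι] [DecidableEq ι] in
lemma apply_eq_zero_of_eq_of_eq_neg {σ : Module.End K W} (hBσ : ∀ x y, B (σ x) (σ y) = B x y)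
    {x y : W} (hx : σ x = x) (hy : σ y = -y) : B x y = 0 ∧ B y x = 0 := by
  have hxy := hBσ x y
  have hyx := hBσ y x
  rw [hx, hy, map_neg] at hxy
  rw [hx, hy, map_neg, LinearMap.neg_apply] at hyx
  exact ⟨mul_left_cancel₀ two_ne_zero (by linear_combination -hxy : (2 : K) * B x y = 2 * 0),
    mul_left_cancel₀ two_ne_zero (by linear_combination -hyx : (2 : K) * B y x = 2 * 0)⟩

theorem exists_det_toMatrix_eq_neg_one_pow_mul_sq (σ τ : Module.End K W) (hσ : σ * σ = 1)
    (hστ : σ * τ = -(τ * σ)) (hτ : Function.Injective τ)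
    (hBσ : ∀ x y, B (σ x) (σ y) = B x y) (hBτ : ∀ x y, B (τ x) (τ y) = -B x y)
    (b : Module.Basis (ι ⊕ ι) K W) (hb : ∀ i, b (.inr i) = σ (b (.inl i))) :
    ∃ d, (toMatrix b B).det = (-1) ^ Fintype.card ι * d ^ 2 := by
  set s : ι → W := fun i => b (.inl i) + b (.inr i)
  have hs : ∀ i, σ (s i) = s i := fun i => by
    simp only [s, hb, map_add, ← Module.End.mul_apply, hσ, Module.End.one_apply, add_comm]
  have hτs : ∀ i, σ (τ (s i)) = -τ (s i) := fun i => by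
    rw [← Module.End.mul_apply, hστ, LinearMap.neg_apply, Module.End.mul_apply, hs]
  have hc : LinearIndependent K (Sum.elim s (τ ∘ s)) := by
    refine b.linearIndependent_inl_add_inr.sum_type
      (b.linearIndependent_inl_add_inr.map' τ (LinearMap.ker_eq_bot.mpr hτ))
      (σ.disjoint_ker_sub_one_ker_add_one.mono ?_ ?_)
    · rw [Submodule.span_le, Set.range_subset_iff]
      exact fun i => LinearMap.mem_ker.mpr (sub_eq_zero.mpr (hs i))
    · rw [Submodule.span_le, Set.range_subset_iff]
      exact fun i => LinearMap.mem_ker.mpr (add_eq_zero_iff_eq_neg.mpr (hτs i))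
  have : FiniteDimensional K W := .of_basis b
  let b' := basisOfLinearIndependentOfCardEqFinrank' _ hc (Module.finrank_eq_card_basis b).symm
  set G := Matrix.of fun i j => B (s i) (s j)
  have hG : toMatrix b' B = Matrix.fromBlocks G 0 0 (-G) := by
    ext (i | i) (j | j)
    · simp [b', toMatrix_apply, G]
    · simp [b', toMatrix_apply, (apply_eq_zero_of_eq_of_eq_neg hBσ (hs i) (hτs j)).1]
    · simp [b', toMatrix_apply, (apply_eq_zero_of_eq_of_eq_neg hBσ (hs j) (hτs i)).2]
    · simp [b', toMatrix_apply, G, hBτ]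
  refine ⟨G.det / b.det b', ?_⟩
  have h := det_toMatrix_eq_det_toMatrix_mul_sq (B := B) b b'
  rw [hG, Matrix.det_fromBlocks_zero₂₁, Matrix.det_neg] at h
  rw [div_pow, ← mul_div_assoc, eq_div_iff (pow_ne_zero 2 (b.isUnit_det b').ne_zero)]
  linear_combination -h

end LinearMap.BilinForm

theorem gram_det_is_square_general {V : Type*} [AddCommGroup V] [Module ℝ V]
    (n : ℕ) (Q : QuadraticForm ℝ V)
    (hQ : QuadraticMap.Equivalent Q
      (QuadraticMap.weightedSumSquares ℝ
        (Sum.elim (fun _ : Fin n => (1 : ℝ)) (fun _ : Fin n => (-1 : ℝ)))))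
    (W : Type*) [AddCommGroup W] [Module ℝ W] [Module (CliffordAlgebra Q) W]
    [IsScalarTower ℝ (CliffordAlgebra Q) W]
    (B : LinearMap.BilinForm ℝ W)
    (hBcompat : ∀ (u : V) (s t : W), B (ι Q u • s) (ι Q u • t) = Q u * B s t)
    (v : V) (hv : Q v = 1)
    (w : Fin (2 ^ (n - 1)) → W) (bas : Module.Basis (Fin (2 ^ (n - 1)) ⊕ Fin (2 ^ (n - 1))) ℝ W)
    (hbas₁ : ∀ i, bas (Sum.inl i) = w i)
    (hbas₂ : ∀ i, bas (Sum.inr i) = ι Q v • w i) :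
    (1 < n → ∃ d : ℝ, (Matrix.of fun i j => B (bas i) (bas j)).det = d ^ 2 ∧
        0 ≤ (Matrix.of fun i j => B (bas i) (bas j)).det) ∧
    (n = 1 → ∃ d : ℝ, (Matrix.of fun i j => B (bas i) (bas j)).det = -(d ^ 2) ∧
        (Matrix.of fun i j => B (bas i) (bas j)).det ≤ 0) := by
  obtain ⟨u, hu, hvu⟩ := QuadraticMap.exists_isOrtho_eq_neg_of_equivalent_split hQ v
  rw [hv] at hu
  set σ := Algebra.lsmul ℝ ℝ W (ι Q v)
  set τ := Algebra.lsmul ℝ ℝ W (ι Q u)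
  have hσ : σ * σ = 1 := by rw [← map_mul, ι_sq_scalar, hv, map_one, map_one]
  have hτ : τ * τ = -1 := by
    rw [← map_mul, ι_sq_scalar, hu, map_neg, map_one, map_neg, map_one]
  have hστ : σ * τ = -(τ * σ) := by
    simp only [σ, τ, ← map_mul, ← map_neg, ι_mul_ι_comm_of_isOrtho hvu]
  have hτ_inj : Function.Injective τ := Function.LeftInverse.injective (g := -τ) fun x => by
    rw [← Module.End.mul_apply, neg_mul, hτ, neg_neg, Module.End.one_apply]
  obtain ⟨d, hd⟩ := LinearMap.BilinForm.exists_det_toMatrix_eq_neg_one_pow_mul_sq (B := B)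
    σ τ hσ hστ hτ_inj (fun x y => by simp [σ, hBcompat, hv])
    (fun x y => by simp [τ, hBcompat, hu]) bas (fun i => by simp [σ, hbas₁, hbas₂])
  rw [Fintype.card_fin] at hd
  have hGram : Matrix.of (fun i j => B (bas i) (bas j)) = LinearMap.BilinForm.toMatrix bas B := by
    ext i j
    rw [LinearMap.BilinForm.toMatrix_apply, Matrix.of_apply]
  rw [hGram, hd]
  constructor
  · intro hn
    rw [(Nat.even_pow.mpr ⟨even_two, by omega⟩).neg_one_pow, one_mul]
    exact ⟨d, rfl, sq_nonneg d⟩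
  · rintro rfl
    rw [pow_zero, pow_one, neg_one_mul]
    exact ⟨d, rfl, neg_nonpos.mpr (sq_nonneg d)⟩

/-- Let `W` be an irreducible `Cl^{n,n}`-module, `⟨·,·⟩` a nonzero bilinear
pairing compatible with Clifford multiplication, `v` a vector with `⟨v,v⟩ = 1` and
`(w_1, …, w_{r/2}, v·w_1, …, v·w_{r/2})` a basis of `W` (`r = dim W = 2^n`).  Then for `n > 1`
the Gram determinant of `⟨·,·⟩` in this basis is a perfect square (in particular nonnegative),
while for `n = 1` it is minus a perfect square (hence nonpositive). -/
theorem gram_det_is_square {V : Type*} [AddCommGroup V] [Module ℝ V]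
    (n : ℕ) (Q : QuadraticForm ℝ V)
    (hQ : QuadraticMap.Equivalent Q
      (QuadraticMap.weightedSumSquares ℝ
        (Sum.elim (fun _ : Fin n => (1 : ℝ)) (fun _ : Fin n => (-1 : ℝ)))))
    (W : Type*) [AddCommGroup W] [Module ℝ W] [Module (CliffordAlgebra Q) W]
    [IsScalarTower ℝ (CliffordAlgebra Q) W] [IsSimpleModule (CliffordAlgebra Q) W]
    (hdim : Module.finrank ℝ W = 2 ^ n)
    (B : LinearMap.BilinForm ℝ W) (hB : B ≠ 0)
    (hBcompat : ∀ (u : V) (s t : W), B (ι Q u • s) (ι Q u • t) = Q u * B s t)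
    (v : V) (hv : Q v = 1)
    (w : Fin (2 ^ (n - 1)) → W) (bas : Module.Basis (Fin (2 ^ (n - 1)) ⊕ Fin (2 ^ (n - 1))) ℝ W)
    (hbas₁ : ∀ i, bas (Sum.inl i) = w i)
    (hbas₂ : ∀ i, bas (Sum.inr i) = ι Q v • w i) :
    (1 < n → ∃ d : ℝ, (Matrix.of fun i j => B (bas i) (bas j)).det = d ^ 2 ∧
        0 ≤ (Matrix.of fun i j => B (bas i) (bas j)).det) ∧
    (n = 1 → ∃ d : ℝ, (Matrix.of fun i j => B (bas i) (bas j)).det = -(d ^ 2) ∧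
        (Matrix.of fun i j => B (bas i) (bas j)).det ≤ 0) :=
  gram_det_is_square_general n Q hQ W B hBcompat v hv w bas hbas₁ hbas₂
end
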